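/- (Variance of a fresh BGV encryption noise.) Let n ≥ 1 be an integer, t > 0 a real number, and V_u, V_s, V_e > 0. Let m, u, s, e, e_0, e_1 be mutually independent random polynomials in R_n, each with independent identically distributed mean-zero coefficients, of variance t²/12 for m, V_u for u, V_s for s, and V_e for each of e, e_0, e_1. Then the fresh noise ν_clean = m + t·(e·u + e_1·s + e_0), computed in R_n, satisfies, for every 0 ≤ i ≤ n−1, Var(ν_clean|_i) = t² · ( 1/12 + n·V_e·V_u + V_e + n·V_e·V_s ). -/

import Mathlib

open MeasureTheory ProbabilityTheory Polynomial
open scoped NNReal ENNReal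

/-- The polynomial in `ℝ[x]` of degree `< n` with coefficients `c 0, …, c (n-1)`;
it is the canonical representative of an element of `R_n = ℝ[x]/(x^n+1)`. -/
noncomputable def polyOf (n : ℕ) (c : Fin n → ℝ) : Polynomial ℝ :=
  ∑ j : Fin n, Polynomial.C (c j) * Polynomial.X ^ (j : ℕ)

/-- The `i`-th coefficient of the unique representative of degree `< n` of
`p mod (x^n + 1)`, i.e. the `i`-th coefficient of the image of `p` in `R_n`. -/
noncomputable def redCoeff (n : ℕ) (p : Polynomial ℝ) (i : ℕ) : ℝ :=
  (p %ₘ (Polynomial.X ^ n + 1)).coeff i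

/-! Since `x^n = -1` in `R_n`, the `i`-th coefficient of a product `c·d` is the negacyclic
convolution `∑ ± c_a d_b` over `a + b ≡ i (mod n)`, in which every `a` meets exactly one `b`.
For independent centred vectors `X, Y` with uncorrelated coordinates, the bilinear form
`∑ w_ab X_a Y_b` has variance `Var X_a · Var Y_b · ∑ w_ab²`, and `∑ w_ab² = n` for the
negacyclic weights. The terms `m_i`, `(e·u)_i`, `(e₁·s)_i`, `e₀_i` are functions of disjoint
groups of the six independent polynomials, so their variances add. -/

lemma coeff_modByMonic_X_pow_add_one {R : Type*} [Ring R] {p : R[X]} {n i : ℕ}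
    (hp : p.natDegree < 2 * n) (hi : i < n) :
    (p %ₘ (X ^ n + 1)).coeff i = p.coeff i - p.coeff (n + i) := by
  nontriviality R
  have hmonic : (X ^ n + 1 : R[X]).Monic := leadingCoeff_X_pow_add_one (by omega)
  have hdeg : (X ^ n + 1 : R[X]).natDegree = n := by
    simpa using natDegree_X_pow_add_C (n := n) (r := (1 : R))
  have hq : (p /ₘ (X ^ n + 1)).coeff (n + i) = 0 :=
    coeff_eq_zero_of_natDegree_lt (by rw [natDegree_divByMonic p hmonic, hdeg]; omega)
  have hr : (p %ₘ (X ^ n + 1)).coeff (n + i) = 0 :=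
    coeff_eq_zero_of_degree_lt <| (degree_modByMonic_lt p hmonic).trans_le <| by
      rw [degree_eq_natDegree hmonic.ne_zero, hdeg]; exact_mod_cast (by omega : n ≤ n + i)
  conv_rhs => rw [← modByMonic_add_div p (X ^ n + 1)]
  simp only [coeff_add, add_mul, one_mul, coeff_X_pow_mul', hq, hr]
  simp [show ¬ n ≤ i by omega]

section Negacyclic

variable {n : ℕ}

lemma coeff_polyOf (c : Fin n → ℝ) (j : Fin n) : (polyOf n c).coeff j = c j := by
  simp [polyOf, finsetSum_coeff, Fin.val_inj]

lemma degree_polyOf_lt (c : Fin n → ℝ) : (polyOf n c).degree < n :=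
  degree_sum_fin_lt c

lemma natDegree_polyOf_lt [NeZero n] (c : Fin n → ℝ) : (polyOf n c).natDegree < n := by
  rcases eq_or_ne (polyOf n c) 0 with h | h
  · simpa [h] using Nat.pos_of_neZero n
  · exact (natDegree_lt_iff_degree_lt h).2 (degree_polyOf_lt c)

lemma coeff_polyOf_mul_polyOf (c d : Fin n → ℝ) (k : ℕ) :
    (polyOf n c * polyOf n d).coeff k =
      ∑ a : Fin n, ∑ b : Fin n, if k = (a : ℕ) + b then c a * d b else 0 := by
  simp only [polyOf, Finset.sum_mul_sum, finsetSum_coeff]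
  refine Finset.sum_congr rfl fun a _ => Finset.sum_congr rfl fun b _ => ?_
  rw [mul_mul_mul_comm, ← C_mul, ← pow_add, coeff_C_mul_X_pow]

lemma redCoeff_add (p q : ℝ[X]) (i : ℕ) :
    redCoeff n (p + q) i = redCoeff n p i + redCoeff n q i := by
  simp [redCoeff, add_modByMonic]

lemma redCoeff_C_mul (a : ℝ) (p : ℝ[X]) (i : ℕ) : redCoeff n (C a * p) i = a * redCoeff n p i := by
  simp [redCoeff, ← smul_eq_C_mul, smul_modByMonic]

lemma redCoeff_polyOf (c : Fin n → ℝ) (i : Fin n) : redCoeff n (polyOf n c) i = c i := by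
  have hX : (X ^ n + 1 : ℝ[X]).degree = n := by simpa using degree_X_pow_add_C i.pos (1 : ℝ)
  rw [redCoeff, (modByMonic_eq_self_iff (leadingCoeff_X_pow_add_one i.pos)).2
    (hX ▸ degree_polyOf_lt c), coeff_polyOf]

/-- The coefficient of `c_a d_b` in the `i`-th coefficient of a product in `R_n`. -/
def negacyclicWeight (i a b : Fin n) : ℝ :=
  (if (i : ℕ) = a + b then 1 else 0) - if n + i = a + b then 1 else 0

def negacyclicMul (c d : Fin n → ℝ) (i : Fin n) : ℝ :=
  ∑ a, ∑ b, negacyclicWeight i a b * (c a * d b)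

lemma redCoeff_polyOf_mul (c d : Fin n → ℝ) (i : Fin n) :
    redCoeff n (polyOf n c * polyOf n d) i = negacyclicMul c d i := by
  have : NeZero n := ⟨i.pos.ne'⟩
  have hdeg : (polyOf n c * polyOf n d).natDegree < 2 * n :=
    natDegree_mul_le.trans_lt (by linarith [natDegree_polyOf_lt c, natDegree_polyOf_lt d])
  simp only [redCoeff, coeff_modByMonic_X_pow_add_one hdeg i.isLt, coeff_polyOf_mul_polyOf,
    ← Finset.sum_sub_distrib, negacyclicMul, negacyclicWeight]
  refine Finset.sum_congr rfl fun a _ => Finset.sum_congr rfl fun b _ => ?_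
  split_ifs <;> ring

lemma negacyclicWeight_sq (i a b : Fin n) :
    negacyclicWeight i a b ^ 2 = if b = i - a then 1 else 0 := by
  have : NeZero n := ⟨i.pos.ne'⟩
  have hb : b = i - a ↔ (i : ℕ) = a + b ∨ n + i = a + b := by
    rw [eq_sub_iff_add_eq', Fin.ext_iff, Fin.val_add]
    rcases lt_or_ge ((a : ℕ) + b) n with h | h
    · rw [Nat.mod_eq_of_lt h]; omega
    · rw [Nat.mod_eq_sub_mod h, Nat.mod_eq_of_lt (by omega)]; omega
  simp only [negacyclicWeight, hb]
  split_ifs <;> first | omega | norm_num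

lemma sum_negacyclicWeight_sq (i : Fin n) : ∑ a, ∑ b, negacyclicWeight i a b ^ 2 = n := by
  simp [negacyclicWeight_sq]

@[fun_prop]
lemma measurable_negacyclicMul {α : Type*} [MeasurableSpace α] {f g : α → Fin n → ℝ}
    (hf : Measurable f) (hg : Measurable g) (i : Fin n) :
    Measurable fun x => negacyclicMul (f x) (g x) i := by
  unfold negacyclicMul
  fun_prop

end Negacyclic

section Probability

variable {Ω : Type*} [MeasurableSpace Ω] {P : Measure Ω}

namespace ProbabilityTheory

lemma IndepFun.memLp_two_mul {X Y : Ω → ℝ} (hXY : IndepFun X Y P) (hX : MemLp X 2 P)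
    (hY : MemLp Y 2 P) : MemLp (X * Y) 2 P := by
  rw [memLp_two_iff_integrable_sq (hX.aestronglyMeasurable.mul hY.aestronglyMeasurable)]
  simp_rw [Pi.mul_apply, mul_pow]
  exact (hXY.comp (measurable_id.pow_const 2) (measurable_id.pow_const 2)).integrable_mul
    hX.integrable_sq hY.integrable_sq

lemma iIndepFun.integral_mul_eq_ite {ι : Type*} [DecidableEq ι] {X : ι → Ω → ℝ}
    (hX : iIndepFun X P) (hX0 : ∀ a, P[X a] = 0) (hX2 : ∀ a, MemLp (X a) 2 P) (a b : ι) :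
    ∫ ω, X a ω * X b ω ∂P = if a = b then Var[X a; P] else 0 := by
  split_ifs with h
  · subst h
    simp_rw [variance_of_integral_eq_zero (hX2 a).aemeasurable (hX0 a), sq]
  · rw [(hX.indepFun h).integral_fun_mul_eq_mul_integral (hX2 a).aestronglyMeasurable
      (hX2 b).aestronglyMeasurable, hX0 a, zero_mul]

end ProbabilityTheory

section Bilinear

variable {ι κ : Type*} {X : ι → Ω → ℝ} {Y : κ → Ω → ℝ}

lemma memLp_sum_sum_mul [Fintype ι] [Fintype κ]
    (hXY : IndepFun (fun ω a => X a ω) (fun ω b => Y b ω) P)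
    (hX2 : ∀ a, MemLp (X a) 2 P) (hY2 : ∀ b, MemLp (Y b) 2 P) (w : ι → κ → ℝ) :
    MemLp (fun ω => ∑ a, ∑ b, w a b * (X a ω * Y b ω)) 2 P :=
  memLp_finsetSum _ fun a _ => memLp_finsetSum _ fun b _ =>
    ((hXY.comp (measurable_pi_apply a) (measurable_pi_apply b)).memLp_two_mul
      (hX2 a) (hY2 b)).const_mul _

variable [IsProbabilityMeasure P]
  (hX : iIndepFun X P) (hY : iIndepFun Y P)
  (hXY : IndepFun (fun ω a => X a ω) (fun ω b => Y b ω) P)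
  (hX0 : ∀ a, P[X a] = 0) (hY0 : ∀ b, P[Y b] = 0)
  (hX2 : ∀ a, MemLp (X a) 2 P) (hY2 : ∀ b, MemLp (Y b) 2 P)
  {σX σY : ℝ} (hσX : ∀ a, Var[X a; P] = σX) (hσY : ∀ b, Var[Y b; P] = σY)
include hX hY hXY hX0 hY0 hX2 hY2 hσX hσY

lemma covariance_mul_mul_of_indepFun [DecidableEq ι] [DecidableEq κ] (a a' : ι) (b b' : κ) :
    cov[X a * Y b, X a' * Y b'; P] = (if a = a' then σX else 0) * (if b = b' then σY else 0) := by
  have hXYab : ∀ a b, IndepFun (X a) (Y b) P := fun a b =>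
    hXY.comp (measurable_pi_apply a) (measurable_pi_apply b)
  have hmean : ∀ a b, P[X a * Y b] = 0 := fun a b => by
    rw [(hXYab a b).integral_mul_eq_mul_integral (hX2 a).aestronglyMeasurable
      (hY2 b).aestronglyMeasurable, hX0 a, zero_mul]
  have hfactor : P[X a * Y b * (X a' * Y b')] = P[X a * X a'] * P[Y b * Y b'] := by
    have h : IndepFun (X a * X a') (Y b * Y b') P :=
      hXY.comp (φ := fun x : ι → ℝ => x a * x a') (ψ := fun y : κ → ℝ => y b * y b')
        (by fun_prop) (by fun_prop)
    rw [mul_mul_mul_comm, h.integral_mul_eq_mul_integral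
      ((hX2 a).aestronglyMeasurable.mul (hX2 a').aestronglyMeasurable)
      ((hY2 b).aestronglyMeasurable.mul (hY2 b').aestronglyMeasurable)]
  rw [covariance_eq_sub ((hXYab a b).memLp_two_mul (hX2 a) (hY2 b))
    ((hXYab a' b').memLp_two_mul (hX2 a') (hY2 b')), hmean, hfactor]
  simp only [Pi.mul_apply, hX.integral_mul_eq_ite hX0 hX2, hY.integral_mul_eq_ite hY0 hY2]
  split_ifs <;> simp_all

theorem variance_sum_sum_mul_of_indepFun [Fintype ι] [Fintype κ] (w : ι → κ → ℝ) :
    Var[fun ω => ∑ a, ∑ b, w a b * (X a ω * Y b ω); P] = σX * σY * ∑ a, ∑ b, w a b ^ 2 := by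
  classical
  set W : ι × κ → Ω → ℝ := fun p ω => w p.1 p.2 * (X p.1 * Y p.2) ω
  have hW2 : ∀ p, MemLp (W p) 2 P := fun p =>
    ((hXY.comp (measurable_pi_apply p.1) (measurable_pi_apply p.2)).memLp_two_mul
      (hX2 p.1) (hY2 p.2)).const_mul _
  have hcov : ∀ p q, cov[W p, W q; P] = if p = q then w p.1 p.2 ^ 2 * (σX * σY) else 0 := by
    rintro ⟨a, b⟩ ⟨a', b'⟩
    simp only [W, covariance_const_mul_left, covariance_const_mul_right]
    rw [covariance_mul_mul_of_indepFun hX hY hXY hX0 hY0 hX2 hY2 hσX hσY]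
    split_ifs <;> simp_all [sq, mul_assoc]
  calc Var[fun ω => ∑ a, ∑ b, w a b * (X a ω * Y b ω); P]
      = Var[fun ω => ∑ p, W p ω; P] := by simp only [W, Fintype.sum_prod_type, Pi.mul_apply]
    _ = ∑ p, ∑ q, cov[W p, W q; P] := variance_fun_sum hW2
    _ = σX * σY * ∑ a, ∑ b, w a b ^ 2 := by
      simp [hcov, Fintype.sum_prod_type, Finset.mul_sum, mul_comm]

end Bilinear

variable {n : ℕ} {Z : Fin 6 → Ω → Fin n → ℝ}

/-- `Z 0, …, Z 5` are the coefficient vectors of `m, u, s, e, e₀, e₁`. -/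
theorem variance_add_mul_negacyclicMul (hZ : iIndepFun Z P)
    (hZ2 : ∀ k j, MemLp (fun ω => Z k ω j) 2 P) (t : ℝ) (i : Fin n) :
    Var[fun ω => Z 0 ω i + t * (negacyclicMul (Z 3 ω) (Z 1 ω) i
        + negacyclicMul (Z 5 ω) (Z 2 ω) i + Z 4 ω i); P] =
      Var[fun ω => Z 0 ω i; P] + t ^ 2 * (Var[fun ω => negacyclicMul (Z 3 ω) (Z 1 ω) i; P]
        + Var[fun ω => negacyclicMul (Z 5 ω) (Z 2 ω) i; P] + Var[fun ω => Z 4 ω i; P]) := by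
  have hZm : ∀ k, AEMeasurable (Z k) P := fun k =>
    aemeasurable_pi_lambda _ fun j => (hZ2 k j).aemeasurable
  have hmul : ∀ k l, k ≠ l → MemLp (fun ω => negacyclicMul (Z k ω) (Z l ω) i) 2 P :=
    fun k l hkl => memLp_sum_sum_mul (hZ.indepFun hkl) (hZ2 k) (hZ2 l) _
  have hA := hmul 3 1 (by decide)
  have hB := hmul 5 2 (by decide)
  have h_m : IndepFun (fun ω => Z 0 ω i) (fun ω => t * (negacyclicMul (Z 3 ω) (Z 1 ω) i
      + negacyclicMul (Z 5 ω) (Z 2 ω) i + Z 4 ω i)) P := by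
    refine (hZ.indepFun_finset₀ {0} {1, 2, 3, 4, 5} (by decide) hZm).comp
      (φ := fun z : ({0} : Finset (Fin 6)) → Fin n → ℝ => z ⟨0, by decide⟩ i)
      (ψ := fun z : ({1, 2, 3, 4, 5} : Finset (Fin 6)) → Fin n → ℝ =>
        t * (negacyclicMul (z ⟨3, by decide⟩) (z ⟨1, by decide⟩) i
          + negacyclicMul (z ⟨5, by decide⟩) (z ⟨2, by decide⟩) i + z ⟨4, by decide⟩ i))
      ?_ ?_ <;> fun_prop
  have h_AB : IndepFun (fun ω => negacyclicMul (Z 3 ω) (Z 1 ω) i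
      + negacyclicMul (Z 5 ω) (Z 2 ω) i) (fun ω => Z 4 ω i) P := by
    refine (hZ.indepFun_finset₀ {1, 2, 3, 5} {4} (by decide) hZm).comp
      (φ := fun z : ({1, 2, 3, 5} : Finset (Fin 6)) → Fin n → ℝ =>
        negacyclicMul (z ⟨3, by decide⟩) (z ⟨1, by decide⟩) i
          + negacyclicMul (z ⟨5, by decide⟩) (z ⟨2, by decide⟩) i)
      (ψ := fun z : ({4} : Finset (Fin 6)) → Fin n → ℝ => z ⟨4, by decide⟩ i) ?_ ?_ <;> fun_prop
  have h_A : IndepFun (fun ω => negacyclicMul (Z 3 ω) (Z 1 ω) i)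
      (fun ω => negacyclicMul (Z 5 ω) (Z 2 ω) i) P := by
    refine (hZ.indepFun_prodMk_prodMk₀ hZm 3 1 5 2 (by decide) (by decide) (by decide)
      (by decide)).comp (φ := fun z : (Fin n → ℝ) × (Fin n → ℝ) => negacyclicMul z.1 z.2 i)
      (ψ := fun z : (Fin n → ℝ) × (Fin n → ℝ) => negacyclicMul z.1 z.2 i) ?_ ?_ <;> fun_prop
  -- `by exact` postpones these proofs, so the summands are matched in the shape of `h_m`, `h_AB`.
  rw [h_m.variance_fun_add (hZ2 0 i) (by exact ((hA.add hB).add (hZ2 4 i)).const_mul t),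
    variance_const_mul, h_AB.variance_fun_add (by exact hA.add hB) (hZ2 4 i),
    h_A.variance_fun_add hA hB]

end Probability

theorem stmt11_general {Ω : Type*} [MeasurableSpace Ω] (P : Measure Ω) [IsProbabilityMeasure P]
    (n : ℕ) (t : ℝ)
    (Vu Vs Ve : ℝ)
    (m u s e e₀ e₁ : Fin n → Ω → ℝ)
    -- the six random polynomials are mutually independent
    (hindep : iIndepFun
      (![fun ω (j : Fin n) => m j ω, fun ω j => u j ω, fun ω j => s j ω,
         fun ω j => e j ω, fun ω j => e₀ j ω, fun ω j => e₁ j ω] :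
        Fin 6 → Ω → Fin n → ℝ) P)
    -- each has independent identically distributed mean-zero square-integrable
    -- coefficients
    (hiid : ∀ f ∈ [m, u, s, e, e₀, e₁],
      iIndepFun f P ∧
      (∀ j j', Measure.map (f j) P = Measure.map (f j') P) ∧
      (∀ j, (∫ ω, f j ω ∂P) = 0) ∧ (∀ j, MemLp (f j) 2 P))
    -- prescribed coefficient variances
    (hmvar : ∀ j, variance (m j) P = t ^ 2 / 12)
    (huvar : ∀ j, variance (u j) P = Vu)
    (hsvar : ∀ j, variance (s j) P = Vs)
    (hevar : ∀ j, variance (e j) P = Ve)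
    (he₀var : ∀ j, variance (e₀ j) P = Ve)
    (he₁var : ∀ j, variance (e₁ j) P = Ve)
    (i : Fin n) :
    variance (fun ω => redCoeff n
        (polyOf n (fun j => m j ω) + Polynomial.C t *
          (polyOf n (fun j => e j ω) * polyOf n (fun j => u j ω)
            + polyOf n (fun j => e₁ j ω) * polyOf n (fun j => s j ω)
            + polyOf n (fun j => e₀ j ω))) i) P
      = t ^ 2 * (1 / 12 + n * Ve * Vu + Ve + n * Ve * Vs) := by
  have hZ2 : ∀ k j, MemLp (fun ω => (![fun ω (j : Fin n) => m j ω, fun ω j => u j ω,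
      fun ω j => s j ω, fun ω j => e j ω, fun ω j => e₀ j ω, fun ω j => e₁ j ω] :
        Fin 6 → Ω → Fin n → ℝ) k ω j) 2 P := by
    intro k
    fin_cases k <;> exact (hiid _ (by simp)).2.2.2
  obtain ⟨hu, -, hu0, hu2⟩ := hiid u (by simp)
  obtain ⟨hs, -, hs0, hs2⟩ := hiid s (by simp)
  obtain ⟨he, -, he0, he2⟩ := hiid e (by simp)
  obtain ⟨he₁, -, he₁0, he₁2⟩ := hiid e₁ (by simp)
  simp only [redCoeff_add, redCoeff_C_mul, redCoeff_polyOf, redCoeff_polyOf_mul]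
  refine (variance_add_mul_negacyclicMul hindep hZ2 t i).trans ?_
  simp only [negacyclicMul, Matrix.cons_val]
  rw [variance_sum_sum_mul_of_indepFun he hu (hindep.indepFun (by decide : (3 : Fin 6) ≠ 1))
      he0 hu0 he2 hu2 hevar huvar,
    variance_sum_sum_mul_of_indepFun he₁ hs (hindep.indepFun (by decide : (5 : Fin 6) ≠ 2))
      he₁0 hs0 he₁2 hs2 he₁var hsvar,
    sum_negacyclicWeight_sq, hmvar, he₀var]
  ring

/-- **variance of a fresh BGV encryption noise.** With `m, u, s, e, e₀, e₁`
mutually independent random polynomials in `R_n` having i.i.d. mean-zero coefficients of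
variances `t²/12, V_u, V_s, V_e, V_e, V_e`, the fresh noise
`ν_clean = m + t(e·u + e₁·s + e₀)` satisfies
`Var(ν_clean|_i) = t²(1/12 + n V_e V_u + V_e + n V_e V_s)`. -/
theorem stmt11 {Ω : Type*} [MeasurableSpace Ω] (P : Measure Ω) [IsProbabilityMeasure P]
    (n : ℕ) (hn : 1 ≤ n) (t : ℝ) (ht : 0 < t)
    (Vu Vs Ve : ℝ) (hVu : 0 < Vu) (hVs : 0 < Vs) (hVe : 0 < Ve)
    (m u s e e₀ e₁ : Fin n → Ω → ℝ)
    (hmeas : ∀ f ∈ [m, u, s, e, e₀, e₁], ∀ j, Measurable (f j))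
    -- the six random polynomials are mutually independent
    (hindep : iIndepFun
      (![fun ω (j : Fin n) => m j ω, fun ω j => u j ω, fun ω j => s j ω,
         fun ω j => e j ω, fun ω j => e₀ j ω, fun ω j => e₁ j ω] :
        Fin 6 → Ω → Fin n → ℝ) P)
    -- each has independent identically distributed mean-zero square-integrable
    -- coefficients
    (hiid : ∀ f ∈ [m, u, s, e, e₀, e₁],
      iIndepFun f P ∧
      (∀ j j', Measure.map (f j) P = Measure.map (f j') P) ∧
      (∀ j, (∫ ω, f j ω ∂P) = 0) ∧ (∀ j, MemLp (f j) 2 P))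
    -- prescribed coefficient variances
    (hmvar : ∀ j, variance (m j) P = t ^ 2 / 12)
    (huvar : ∀ j, variance (u j) P = Vu)
    (hsvar : ∀ j, variance (s j) P = Vs)
    (hevar : ∀ j, variance (e j) P = Ve)
    (he₀var : ∀ j, variance (e₀ j) P = Ve)
    (he₁var : ∀ j, variance (e₁ j) P = Ve)
    (i : Fin n) :
    variance (fun ω => redCoeff n
        (polyOf n (fun j => m j ω) + Polynomial.C t *
          (polyOf n (fun j => e j ω) * polyOf n (fun j => u j ω)
            + polyOf n (fun j => e₁ j ω) * polyOf n (fun j => s j ω)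
            + polyOf n (fun j => e₀ j ω))) i) P
      = t ^ 2 * (1 / 12 + n * Ve * Vu + Ve + n * Ve * Vs) :=
  stmt11_general P n t Vu Vs Ve m u s e e₀ e₁ hindep hiid hmvar huvar hsvar hevar he₀var he₁var i
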